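/- Let Φ be a root system with simple system Δ and fix α ∈ Δ. Let m_α = max over λ ∈ Φ of the coefficient of α in λ, let Φ_α = {λ ∈ Φ : coefficient of α in λ equals m_α}, and χ_α = Σ_{λ ∈ Φ_α} λ. Then there exists c > 0 such that for every β ∈ Δ, ⟨χ_α, β⟩ = c·δ_{β,α}. -/

import Mathlib

/-! For `β ∈ Δ` with `β ≠ α`, the reflection `s_β` changes only the `β`-coordinate of a root, so
it maps `Φ_α` to itself and fixes `χ_α`, that is `⟨χ_α, β⟩ = 0`. Expanding `χ_α` in `Δ` then gives
`⟨χ_α, χ_α⟩ = |Φ_α| m_α ⟨χ_α, α⟩`, and `χ_α ≠ 0` because its `α`-coordinate `|Φ_α| m_α` is positive. -/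

open scoped RealInnerProductSpace BigOperators

/-- The reflection in the (nonzero) vector `l` of a real inner product space:
`ω_l (x) = x - (2⟨x,l⟩/⟨l,l⟩) l`. -/
noncomputable def rsRefl {E : Type*} [NormedAddCommGroup E] [InnerProductSpace ℝ E]
    (l x : E) : E :=
  x - (2 * ⟪x, l⟫ / ⟪l, l⟫) • l

variable {E : Type*} [NormedAddCommGroup E] [InnerProductSpace ℝ E]

theorem rsRefl_involutive (l : E) : Function.Involutive (rsRefl l) := by
  intro x
  rcases eq_or_ne l 0 with rfl | hl
  · simp [rsRefl]
  have hll : ⟪l, l⟫ ≠ 0 := inner_self_ne_zero.mpr hl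
  simp only [rsRefl, inner_sub_left, real_inner_smul_left, sub_sub, ← add_smul]
  rw [sub_eq_self, smul_eq_zero]
  left
  field_simp
  ring

theorem rsRefl_sum {ι : Type*} (l : E) (s : Finset ι) (f : ι → E) :
    rsRefl l (∑ x ∈ s, f x) = ∑ x ∈ s, rsRefl l (f x) := by
  simp only [rsRefl, Finset.sum_sub_distrib, sum_inner, ← Finset.sum_smul, Finset.mul_sum,
    Finset.sum_div]

theorem rsRefl_eq_self_iff {l : E} (hl : l ≠ 0) (x : E) : rsRefl l x = x ↔ ⟪x, l⟫ = 0 := by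
  simp [rsRefl, hl]

theorem inner_sum_eq_zero_of_rsRefl_mem {l : E} (hl : l ≠ 0) {S : Finset E}
    (hS : ∀ x ∈ S, rsRefl l x ∈ S) : ⟪∑ x ∈ S, x, l⟫ = 0 := by
  rw [← rsRefl_eq_self_iff hl, rsRefl_sum]
  exact Finset.sum_nbij' _ _ hS hS (fun x _ => rsRefl_involutive l x)
    (fun x _ => rsRefl_involutive l x) (fun _ _ => rfl)

theorem LinearIndependent.coeff_eq_of_eq_sub_smul {ι : Type*} [Fintype ι] {α : ι → E}
    (hli : LinearIndependent ℝ α) {a b : ι → ℝ} {t : ℝ} {i j : ι} (hij : i ≠ j)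
    (h : ∑ k, b k • α k = ∑ k, a k • α k - t • α j) : b i = a i := by
  classical
  have : ∑ k, b k • α k = ∑ k, (a - Pi.single j t : ι → ℝ) k • α k := by
    simp [h, sub_smul, Finset.sum_sub_distrib, Pi.single_apply, ite_smul]
  simpa [hij] using Fintype.linearIndependent_iffₛ.mp hli _ _ this i

theorem LinearIndependent.eq_one_of_eq_sum_smul {ι : Type*} [Fintype ι] {α : ι → E}
    (hli : LinearIndependent ℝ α) {a : ι → ℝ} {i : ι}
    (h : α i = ∑ k, a k • α k) : a i = 1 := by
  classical
  have : ∑ k, a k • α k = ∑ k, (Pi.single i 1 : ι → ℝ) k • α k := by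
    simp [← h, Pi.single_apply, ite_smul]
  simpa using Fintype.linearIndependent_iffₛ.mp hli _ _ this i

theorem inner_sum_smul_of_inner_eq_zero {ι : Type*} [Fintype ι] {α : ι → E} {v : E} {i : ι}
    (hv : ∀ k ≠ i, ⟪v, α k⟫ = 0) (c : ι → ℝ) : ⟪v, ∑ k, c k • α k⟫ = c i * ⟪v, α i⟫ := by
  rw [inner_sum, Finset.sum_eq_single i
    (fun k _ hk => by rw [real_inner_smul_right, hv k hk, mul_zero]) (by simp),
    real_inner_smul_right]

section SimpleCoefficients

variable {ι : Type*} [Fintype ι] {Φ : Finset E} {α : ι → E} {m : E → ι → ℤ}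

theorem coeff_rsRefl_of_ne (hli : LinearIndependent ℝ α)
    (hexp : ∀ l ∈ Φ, l = ∑ k, (m l k : ℝ) • α k) {i j : ι} (hij : i ≠ j) {l : E} (hl : l ∈ Φ)
    (hrl : rsRefl (α j) l ∈ Φ) : m (rsRefl (α j) l) i = m l i := by
  have h := hli.coeff_eq_of_eq_sub_smul (a := fun k => (m l k : ℝ))
    (b := fun k => (m (rsRefl (α j) l) k : ℝ)) hij (by rw [← hexp _ hrl, ← hexp _ hl]; rfl)
  exact_mod_cast h

theorem inner_sum_filter_coeff_eq_zero (hli : LinearIndependent ℝ α)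
    (hexp : ∀ l ∈ Φ, l = ∑ k, (m l k : ℝ) • α k) {i j : ι} (hij : i ≠ j)
    (hrefl : ∀ μ ∈ Φ, rsRefl (α j) μ ∈ Φ) (M : ℤ) :
    ⟪∑ l ∈ Φ.filter (fun l => m l i = M), l, α j⟫ = 0 := by
  refine inner_sum_eq_zero_of_rsRefl_mem (hli.ne_zero j) fun l hl => ?_
  rw [Finset.mem_filter] at hl ⊢
  exact ⟨hrefl l hl.1, (coeff_rsRefl_of_ne hli hexp hij hl.1 (hrefl l hl.1)).trans hl.2⟩

theorem inner_sum_filter_coeff_pos (hli : LinearIndependent ℝ α)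
    (hexp : ∀ l ∈ Φ, l = ∑ k, (m l k : ℝ) • α k) {i : ι} {M : ℤ} (hM : 0 < M)
    (hS : (Φ.filter (fun l => m l i = M)).Nonempty)
    (hperp : ∀ j ≠ i, ⟪∑ l ∈ Φ.filter (fun l => m l i = M), l, α j⟫ = 0) :
    0 < ⟪∑ l ∈ Φ.filter (fun l => m l i = M), l, α i⟫ := by
  set S := Φ.filter (fun l => m l i = M)
  have hχ : ∑ l ∈ S, l = ∑ k, (∑ l ∈ S, (m l k : ℝ)) • α k := by
    rw [Finset.sum_congr rfl fun l hl => hexp l (Finset.mem_filter.mp hl).1, Finset.sum_comm]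
    simp only [Finset.sum_smul, S]
  have hcoeff : ∑ l ∈ S, (m l i : ℝ) = S.card * M := by
    rw [Finset.sum_congr rfl fun l hl => by rw [(Finset.mem_filter.mp hl).2]]
    simp
  have hcoeff_pos : (0 : ℝ) < S.card * M := by
    have : (0 : ℝ) < S.card := by exact_mod_cast hS.card_pos
    have : (0 : ℝ) < M := by exact_mod_cast hM
    positivity
  have hχ_ne : ∑ l ∈ S, l ≠ 0 := fun h => by
    have := Fintype.linearIndependent_iff.mp hli _ (hχ ▸ h) i
    linarith
  have hχχ : ⟪∑ l ∈ S, l, ∑ l ∈ S, l⟫ = S.card * M * ⟪∑ l ∈ S, l, α i⟫ := by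
    nth_rewrite 2 [hχ]
    rw [inner_sum_smul_of_inner_eq_zero hperp, hcoeff]
  exact pos_of_mul_pos_right (hχχ ▸ real_inner_self_pos.mpr hχ_ne) hcoeff_pos.le

end SimpleCoefficients

theorem stmt6_general {r : ℕ} (Φ : Finset E)
    (hrefl : ∀ l ∈ Φ, ∀ μ ∈ Φ, rsRefl l μ ∈ Φ)
    (α : Fin r → E) (hα : ∀ i, α i ∈ Φ) (hli : LinearIndependent ℝ α)
    (m : E → Fin r → ℤ)
    (hexp : ∀ l ∈ Φ, l = ∑ j : Fin r, (m l j : ℝ) • α j)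
    (i : Fin r) :
    ∃ c : ℝ, 0 < c ∧ ∀ j : Fin r,
      ⟪∑ l ∈ Φ.filter (fun l => m l i = Φ.sup' ⟨α i, hα i⟩ (fun l => m l i)), l, α j⟫
        = if j = i then c else 0 := by
  set M := Φ.sup' ⟨α i, hα i⟩ (fun l => m l i)
  have hM : 0 < M := by
    have hαi : m (α i) i = 1 := by exact_mod_cast hli.eq_one_of_eq_sum_smul (hexp _ (hα i))
    have hle : m (α i) i ≤ M := Φ.le_sup' (fun l => m l i) (hα i)
    omega
  obtain ⟨l₀, hl₀, hl₀M⟩ := Φ.exists_mem_eq_sup' ⟨α i, hα i⟩ (fun l => m l i)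
  have hperp : ∀ j ≠ i, ⟪∑ l ∈ Φ.filter (fun l => m l i = M), l, α j⟫ = 0 := fun j hj =>
    inner_sum_filter_coeff_eq_zero hli hexp hj.symm (hrefl _ (hα j)) M
  refine ⟨_, inner_sum_filter_coeff_pos hli hexp hM ⟨l₀, Finset.mem_filter.mpr ⟨hl₀, hl₀M.symm⟩⟩
    hperp, fun j => ?_⟩
  split_ifs with hj
  · rw [hj]
  · exact hperp j hj

/-- Let `Φ` be a root system with simple system `α₁, …, α_r` and fix a simple
root `αᵢ`.  Let `m_{αᵢ}` be the maximal coefficient of `αᵢ` occurring among all roots,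
`Φ_{αᵢ}` the set of roots attaining it, and `χ_{αᵢ}` their sum.  Then there exists `c > 0`
such that `⟨χ_{αᵢ}, α_j⟩ = c · δ_{ij}` for every `j`. -/
theorem stmt6 {r : ℕ} (Φ : Finset E)
    (h0 : (0 : E) ∉ Φ)
    (hrefl : ∀ l ∈ Φ, ∀ μ ∈ Φ, rsRefl l μ ∈ Φ)
    (hint : ∀ l ∈ Φ, ∀ μ ∈ Φ, ∃ z : ℤ, 2 * ⟪μ, l⟫ / ⟪l, l⟫ = (z : ℝ))
    (α : Fin r → E) (hα : ∀ i, α i ∈ Φ) (hli : LinearIndependent ℝ α)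
    (m : E → Fin r → ℤ)
    (hexp : ∀ l ∈ Φ, l = ∑ j : Fin r, (m l j : ℝ) • α j)
    (hsign : ∀ l ∈ Φ, (∀ j, 0 ≤ m l j) ∨ (∀ j, m l j ≤ 0))
    (i : Fin r) :
    ∃ c : ℝ, 0 < c ∧ ∀ j : Fin r,
      ⟪∑ l ∈ Φ.filter (fun l => m l i = Φ.sup' ⟨α i, hα i⟩ (fun l => m l i)), l, α j⟫
        = if j = i then c else 0 :=
  stmt6_general Φ hrefl α hα hli m hexp i
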